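/- arXiv:2305.10117 — 3 statements merged into one kernel-verified Lean document; each statement's English description precedes it below -/
import Mathlib

section
/- Assume w_b, w_f are real with |w_b| + |w_f| < 1, and let f be a solution of the Collatz functional equation for (k, w_b, w_f). Then f(x) is real for every real x with |x| < 1; equivalently, all coefficients aₙ of f are real. -/
/-!
Both `f` and its Schwarz reflection `z ↦ conj (f (conj z))` solve the functional equation,
because the weights and the forcing term `2 x^(2k)` are real. Their difference `h` is bounded
and solves the homogeneous equation; as `x ↦ x²` maps the disc onto itself, any bound `M` for `h`
on the disc improves to `(|wb| + |wf|) M`, so `h = 0`. Hence `f` is real on the real axis, and the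
conjugate sequence `conj aₙ` is again a sequence of Taylor coefficients of `f`, so it equals `aₙ`.
-/

/-- The open unit disc in `ℂ`. -/
def openUnitDisc : Set ℂ := {z : ℂ | ‖z‖ < 1}

/-- `f` is a solution of the Collatz functional equation for `(k, wb, wf)`:
it is analytic and bounded on the open unit disc and satisfies the functional equation
`2 f(x²) = wb (f(x) + f(−x)) + wf x² (f(x⁶) − f(−x⁶)) + 2 x^(2k)` there. -/
def IsSolution (k : ℕ) (wb wf : ℝ) (f : ℂ → ℂ) : Prop :=
  AnalyticOnNhd ℂ f openUnitDisc ∧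
  (∃ C : ℝ, ∀ z ∈ openUnitDisc, ‖f z‖ ≤ C) ∧
  ∀ x : ℂ, ‖x‖ < 1 →
    2 * f (x ^ 2) =
      (wb : ℂ) * (f x + f (-x)) + (wf : ℂ) * x ^ 2 * (f (x ^ 6) - f (-x ^ 6)) +
        2 * x ^ (2 * k)

/-- `a` is the sequence of Taylor coefficients of `f` at `0`:
`f x = Σ aₙ xⁿ` on the open unit disc. -/
def HasCoeffs (f : ℂ → ℂ) (a : ℕ → ℂ) : Prop :=
  ∀ x : ℂ, ‖x‖ < 1 → HasSum (fun n => a n * x ^ n) (f x)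

open ComplexConjugate Set

def collatzOp (wb wf : ℝ) (f : ℂ → ℂ) (x : ℂ) : ℂ :=
  wb * (f x + f (-x)) + wf * x ^ 2 * (f (x ^ 6) - f (-x ^ 6))

/-- The Collatz functional equation with forcing term `g`; the one of `IsSolution k wb wf f` is
`SolvesCollatzEq wb wf (fun x => 2 * x ^ (2 * k)) f`. -/
def SolvesCollatzEq (wb wf : ℝ) (g f : ℂ → ℂ) : Prop :=
  ∀ x ∈ openUnitDisc, 2 * f (x ^ 2) = collatzOp wb wf f x + g x

def schwarzReflection (f : ℂ → ℂ) (z : ℂ) : ℂ := conj (f (conj z))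

lemma conj_mem_openUnitDisc {z : ℂ} (hz : z ∈ openUnitDisc) : conj z ∈ openUnitDisc := by
  simpa [openUnitDisc] using hz

lemma pow_mem_openUnitDisc {z : ℂ} (hz : z ∈ openUnitDisc) {n : ℕ} (hn : n ≠ 0) :
    z ^ n ∈ openUnitDisc := by
  simpa [openUnitDisc, norm_pow, pow_lt_one_iff_of_nonneg (norm_nonneg z) hn] using hz

lemma neg_mem_openUnitDisc {z : ℂ} (hz : z ∈ openUnitDisc) : -z ∈ openUnitDisc := by
  simpa [openUnitDisc] using hz

lemma exists_sq_eq_of_mem_openUnitDisc {w : ℂ} (hw : w ∈ openUnitDisc) :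
    ∃ x ∈ openUnitDisc, x ^ 2 = w := by
  obtain ⟨x, rfl⟩ := IsAlgClosed.exists_pow_nat_eq w two_pos
  exact ⟨x, by simpa [openUnitDisc, norm_pow, pow_lt_one_iff_of_nonneg (norm_nonneg x)] using hw,
    rfl⟩

section collatzOp

variable {wb wf : ℝ}

lemma collatzOp_sub (f g : ℂ → ℂ) (x : ℂ) :
    collatzOp wb wf (f - g) x = collatzOp wb wf f x - collatzOp wb wf g x := by
  simp only [collatzOp, Pi.sub_apply]
  ring

lemma collatzOp_schwarzReflection (f : ℂ → ℂ) (x : ℂ) :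
    collatzOp wb wf (schwarzReflection f) x = conj (collatzOp wb wf f (conj x)) := by
  simp [collatzOp, schwarzReflection]

lemma norm_collatzOp_le {f : ℂ → ℂ} {M : ℝ} (hM : ∀ z ∈ openUnitDisc, ‖f z‖ ≤ M) {x : ℂ}
    (hx : x ∈ openUnitDisc) : ‖collatzOp wb wf f x‖ ≤ (|wb| + |wf|) * (2 * M) := by
  have hx2 : ‖x ^ 2‖ ≤ 1 := (pow_mem_openUnitDisc hx two_ne_zero).le
  have hpair : ∀ y ∈ openUnitDisc, ‖f y‖ + ‖f (-y)‖ ≤ 2 * M := fun y hy => by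
    linarith [hM y hy, hM (-y) (neg_mem_openUnitDisc hy)]
  have hx_pair := hpair x hx
  have hx6_pair := hpair (x ^ 6) (pow_mem_openUnitDisc hx (by norm_num))
  calc ‖collatzOp wb wf f x‖
      ≤ |wb| * (‖f x‖ + ‖f (-x)‖) + |wf| * ‖x ^ 2‖ * (‖f (x ^ 6)‖ + ‖f (-x ^ 6)‖) := by
        refine (norm_add_le _ _).trans ?_
        simp only [norm_mul, Complex.norm_real, Real.norm_eq_abs]
        gcongr
        exacts [norm_add_le _ _, norm_sub_le _ _]
    _ ≤ |wb| * (2 * M) + |wf| * 1 * (2 * M) := by gcongr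
    _ = (|wb| + |wf|) * (2 * M) := by ring

end collatzOp

namespace SolvesCollatzEq

variable {wb wf : ℝ} {g f : ℂ → ℂ}

lemma sub {g' f' : ℂ → ℂ} (h : SolvesCollatzEq wb wf g f) (h' : SolvesCollatzEq wb wf g' f') :
    SolvesCollatzEq wb wf (g - g') (f - f') := fun x hx => by
  simp only [Pi.sub_apply, collatzOp_sub]
  linear_combination h x hx - h' x hx

lemma schwarzReflection (h : SolvesCollatzEq wb wf g f) :
    SolvesCollatzEq wb wf (_root_.schwarzReflection g) (_root_.schwarzReflection f) :=
  fun x hx => by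
    simpa [collatzOp_schwarzReflection, _root_.schwarzReflection, map_ofNat] using
      congrArg conj (h (conj x) (conj_mem_openUnitDisc hx))

lemma norm_le_mul_of_forall_norm_le (h : SolvesCollatzEq wb wf 0 f) {M : ℝ}
    (hM : ∀ z ∈ openUnitDisc, ‖f z‖ ≤ M) : ∀ z ∈ openUnitDisc, ‖f z‖ ≤ (|wb| + |wf|) * M := by
  intro w hw
  obtain ⟨x, hx, rfl⟩ := exists_sq_eq_of_mem_openUnitDisc hw
  have h2 : 2 * ‖f (x ^ 2)‖ = ‖collatzOp wb wf f x‖ := by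
    simpa using congrArg norm (h x hx)
  linarith [norm_collatzOp_le (wb := wb) (wf := wf) hM hx]

lemma eqOn_zero (h : SolvesCollatzEq wb wf 0 f) (hw : |wb| + |wf| < 1) {C : ℝ}
    (hC : ∀ z ∈ openUnitDisc, ‖f z‖ ≤ C) : EqOn f 0 openUnitDisc := by
  have hbound : ∀ n : ℕ, ∀ z ∈ openUnitDisc, ‖f z‖ ≤ (|wb| + |wf|) ^ n * C := by
    intro n
    induction n with
    | zero => simpa using hC
    | succ n ih =>
      simpa only [pow_succ', mul_assoc] using h.norm_le_mul_of_forall_norm_le ih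
  intro z hz
  have hlim : Filter.Tendsto (fun n : ℕ => (|wb| + |wf|) ^ n * C) Filter.atTop (nhds 0) := by
    simpa using (tendsto_pow_atTop_nhds_zero_of_lt_one (by positivity) hw).mul_const C
  simpa using ge_of_tendsto' hlim (hbound · z hz)

end SolvesCollatzEq

lemma norm_sub_schwarzReflection_le {f : ℂ → ℂ} {C : ℝ} (hC : ∀ z ∈ openUnitDisc, ‖f z‖ ≤ C) :
    ∀ z ∈ openUnitDisc, ‖(f - schwarzReflection f) z‖ ≤ C + C := fun z hz =>
  (norm_sub_le _ _).trans <| add_le_add (hC z hz) <| by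
    simpa [schwarzReflection] using hC _ (conj_mem_openUnitDisc hz)

namespace HasCoeffs

variable {f : ℂ → ℂ} {a : ℕ → ℂ}

lemma schwarzReflection (ha : HasCoeffs f a) :
    HasCoeffs (schwarzReflection f) (fun n => conj (a n)) := fun x hx => by
  simpa [Function.comp_def, _root_.schwarzReflection] using
    (ha (conj x) (by simpa using hx)).map (starRingEnd ℂ) Complex.continuous_conj

lemma congr {g : ℂ → ℂ} (ha : HasCoeffs f a) (hfg : EqOn f g openUnitDisc) : HasCoeffs g a :=
  fun x hx => hfg hx ▸ ha x hx

open FormalMultilinearSeries in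
lemma hasFPowerSeriesOnBall (ha : HasCoeffs f a) :
    HasFPowerSeriesOnBall f (ofScalars ℂ a) 0 1 where
  r_le := by
    refine ENNReal.le_of_forall_nnreal_lt fun r hr => le_radius_of_summable _ ?_
    have hr1 : ‖((r : ℝ) : ℂ)‖ < 1 := by simpa using (by exact_mod_cast hr : (r : ℝ) < 1)
    simpa [norm_mul, norm_pow] using summable_norm_iff.mpr (ha _ hr1).summable
  r_pos := one_pos
  hasSum {y} hy := by
    have hy1 : ‖y‖₊ < 1 := by simpa [enorm_eq_nnnorm] using hy
    simpa [ofScalars_apply_eq, mul_comm] using ha y (mod_cast hy1)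

lemma unique {b : ℕ → ℂ} (ha : HasCoeffs f a) (hb : HasCoeffs f b) : a = b :=
  FormalMultilinearSeries.ofScalars_series_injective ℂ ℂ <|
    ha.hasFPowerSeriesOnBall.hasFPowerSeriesAt.eq_formalMultilinearSeries
      hb.hasFPowerSeriesOnBall.hasFPowerSeriesAt

end HasCoeffs

theorem stmt_7_general (k : ℕ) (wb wf : ℝ) (f : ℂ → ℂ) (a : ℕ → ℂ)
    (hw : |wb| + |wf| < 1)
    (hf : IsSolution k wb wf f) (ha : HasCoeffs f a) :
    (∀ x : ℝ, |x| < 1 → (f (x : ℂ)).im = 0) ∧ (∀ n : ℕ, (a n).im = 0) := by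
  obtain ⟨-, ⟨C, hC⟩, hsol : SolvesCollatzEq wb wf (fun x => 2 * x ^ (2 * k)) f⟩ := hf
  have hforce : schwarzReflection (fun x : ℂ => 2 * x ^ (2 * k)) = fun x => 2 * x ^ (2 * k) := by
    ext x
    simp [schwarzReflection, map_ofNat]
  have hdiff := hsol.sub (hforce ▸ hsol.schwarzReflection)
  rw [sub_self] at hdiff
  have hsymm : EqOn f (schwarzReflection f) openUnitDisc := fun z hz =>
    sub_eq_zero.mp (hdiff.eqOn_zero hw (norm_sub_schwarzReflection_le hC) hz)
  refine ⟨fun x hx => ?_, fun n => ?_⟩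
  · have hx' : (x : ℂ) ∈ openUnitDisc := by simpa [openUnitDisc] using hx
    exact Complex.conj_eq_iff_im.mp (by simpa [schwarzReflection] using (hsymm hx').symm)
  · have hconj := (ha.schwarzReflection.congr hsymm.symm).unique ha
    exact Complex.conj_eq_iff_im.mp (congrFun hconj n)

theorem stmt_7 (k : ℕ) (wb wf : ℝ) (f : ℂ → ℂ) (a : ℕ → ℂ)
    (hk : 0 < k) (hw : |wb| + |wf| < 1)
    (hf : IsSolution k wb wf f) (ha : HasCoeffs f a) :
    (∀ x : ℝ, |x| < 1 → (f (x : ℂ)).im = 0) ∧ (∀ n : ℕ, (a n).im = 0) :=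
  stmt_7_general k wb wf f a hw hf ha
end

section
/- Assume 0 < w_b, 0 < w_f and w_b + w_f < 1, and let f be a solution of the Collatz functional equation for (k, w_b, w_f) with coefficients (aₙ). If a positive integer n lies in the Collatz orbit of k, i.e. Col^[i](k) = n for some i ≥ 0, then aₙ > 0. -/
/-- The Collatz map: `3n+1` on odd numbers, `n/2` on even numbers. -/
def Col (n : ℕ) : ℕ := if n % 2 = 1 then 3 * n + 1 else n / 2

/-!
Write `f(x) = E(x²) + x O(x²)`. In `y = x²` the functional equation says
`f(y) = w_b E(y) + w_f y⁴ O(y⁶) + y^k`, and comparing Taylor coefficients gives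
`aₙ = w_b a_{2n} + [n ≡ 4 mod 6] w_f a_{n/3} + [n = k]`, a recurrence along the backward edges
`2n ↦ n` and `(n - 1)/3 ↦ n` of the Collatz graph. The Cauchy estimates make `(aₙ)` bounded.
Since `w_b + w_f < 1`, a bounded real sequence `b` with `b ≥ T b` (`T` the homogeneous part of the
recurrence) is nonnegative: a negative infimum `μ` would satisfy `μ ≥ (w_b + w_f) μ > μ`.
Applied to `± Im a` and to `Re a` this gives `Im aₙ = 0` and `Re aₙ ≥ 0`; then `Re a_k ≥ 1`, and
positivity propagates along the orbit of `k`, each step `p ↦ Col p` being a backward edge.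
-/

open Filter Topology FormalMultilinearSeries

theorem openUnitDisc_eq_ball : openUnitDisc = Metric.ball 0 1 := by
  ext z
  simp [openUnitDisc]

theorem openUnitDisc_eq_eball : openUnitDisc = Metric.eball 0 1 := by
  simpa [openUnitDisc_eq_ball] using (Metric.eball_coe (x := (0 : ℂ)) (ε := 1)).symm

namespace HasCoeffs

variable {g : ℂ → ℂ} {c : ℕ → ℂ}

theorem hasFPowerSeriesOnBall_s10 (h : HasCoeffs g c) :
    HasFPowerSeriesOnBall g (ofScalars ℂ c) 0 1 where
  r_le := by
    refine ENNReal.le_of_forall_nnreal_lt fun r hr => le_radius_of_tendsto _ (l := 0) ?_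
    have hr1 : ‖(r : ℂ)‖ < 1 := by simpa using (by exact_mod_cast hr : (r : ℝ) < 1)
    simpa [ofScalars_norm] using (h r hr1).summable.tendsto_atTop_zero.norm
  r_pos := one_pos
  hasSum {y} hy := by
    rw [← openUnitDisc_eq_eball] at hy
    simpa [ofScalars, mul_comm] using h y hy

theorem unique_s10 {c' : ℕ → ℂ} (h : HasCoeffs g c) (h' : HasCoeffs g c') : c = c' :=
  ofScalars_series_injective ℂ ℂ <| h.hasFPowerSeriesOnBall_s10.hasFPowerSeriesAt
    |>.eq_formalMultilinearSeries h'.hasFPowerSeriesOnBall_s10.hasFPowerSeriesAt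

theorem differentiableOn (h : HasCoeffs g c) : DifferentiableOn ℂ g openUnitDisc := by
  simpa [openUnitDisc_eq_eball] using h.hasFPowerSeriesOnBall_s10.differentiableOn

theorem eq_iteratedDeriv (h : HasCoeffs g c) (n : ℕ) :
    c n = (n.factorial : ℂ)⁻¹ * iteratedDeriv n g 0 := by
  refine congrFun (h.unique_s10 (c' := fun n => (n.factorial : ℂ)⁻¹ * iteratedDeriv n g 0)
    fun x hx => ?_) n
  have hd := h.differentiableOn
  rw [openUnitDisc_eq_ball] at hd
  simpa [mul_comm, mul_left_comm] using
    Complex.hasSum_taylorSeries_on_ball hd (mem_ball_zero_iff.2 hx)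

theorem norm_le {C : ℝ} (h : HasCoeffs g c) (hC : ∀ z ∈ openUnitDisc, ‖g z‖ ≤ C) (n : ℕ) :
    ‖c n‖ ≤ C := by
  have hR : ∀ R ∈ Set.Ioo (0 : ℝ) 1, ‖c n‖ * R ^ n ≤ C := by
    rintro R ⟨hR0, hR1⟩
    have hd : DiffContOnCl ℂ g (Metric.ball 0 R) :=
      h.differentiableOn.diffContOnCl_ball fun z hz => by
        simpa [openUnitDisc] using (mem_closedBall_zero_iff.1 hz).trans_lt hR1
    have hcauchy := Complex.norm_iteratedDeriv_le_of_forall_mem_sphere_norm_le n hR0 hd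
      fun z hz => hC z (by simpa [openUnitDisc, mem_sphere_zero_iff_norm.1 hz] using hR1)
    rw [h.eq_iteratedDeriv, norm_mul, norm_inv, Complex.norm_natCast]
    rw [le_div_iff₀ (by positivity)] at hcauchy
    have := Nat.factorial_pos n
    field_simp
    linarith
  have hlim : Tendsto (fun R : ℝ => ‖c n‖ * R ^ n) (𝓝[<] 1) (𝓝 ‖c n‖) := by
    simpa using (((continuous_pow n).tendsto (1 : ℝ)).const_mul ‖c n‖).mono_left
      nhdsWithin_le_nhds
  exact le_of_tendsto hlim (eventually_of_mem (Ioo_mem_nhdsLT zero_lt_one) hR)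

theorem hasSum_even (h : HasCoeffs g c) {x : ℂ} (hx : ‖x‖ < 1) :
    HasSum (fun m => 2 * c (2 * m) * x ^ (2 * m)) (g x + g (-x)) := by
  have hsum := (h x hx).add (h (-x) (by rwa [norm_neg]))
  refine (((mul_right_injective₀ two_ne_zero).hasSum_iff fun n hn => ?_).2 hsum).congr_fun
    fun m => ?_
  · have hodd : Odd n := Nat.not_even_iff_odd.1 fun ⟨j, hj⟩ => hn ⟨j, by simp [hj]; ring⟩
    simp [hodd.neg_pow]
  · simp [(even_two_mul m).neg_pow]
    ring

theorem hasSum_odd (h : HasCoeffs g c) {x : ℂ} (hx : ‖x‖ < 1) :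
    HasSum (fun m => 2 * c (2 * m + 1) * x ^ (2 * m + 1)) (g x - g (-x)) := by
  have hsum := (h x hx).sub (h (-x) (by rwa [norm_neg]))
  have hinj : Function.Injective fun m : ℕ => 2 * m + 1 := fun _ _ h => by simpa using h
  refine ((hinj.hasSum_iff fun n hn => ?_).2 hsum).congr_fun fun m => ?_
  · have heven : Even n := Nat.not_odd_iff_even.1 fun ⟨j, hj⟩ => hn ⟨j, hj.symm⟩
    simp [heven.neg_pow]
  · simp [(odd_two_mul_add_one m).neg_pow]
    ring

end HasCoeffs

/-- The preimages of `m` under `Col` are `2 * m` and, when `m % 6 = 4`, the odd number `m / 3`. -/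
def colTransfer {R : Type*} [Semiring R] (wb wf : R) (v : ℕ → R) (m : ℕ) : R :=
  wb * v (2 * m) + if m % 6 = 4 then wf * v (m / 3) else 0

section colTransferLinear

variable {wb wf : ℝ}

theorem re_colTransfer (v : ℕ → ℂ) (m : ℕ) :
    (colTransfer (wb : ℂ) wf v m).re = colTransfer wb wf (fun j => (v j).re) m := by
  unfold colTransfer
  split_ifs <;> simp

theorem im_colTransfer (v : ℕ → ℂ) (m : ℕ) :
    (colTransfer (wb : ℂ) wf v m).im = colTransfer wb wf (fun j => (v j).im) m := by
  unfold colTransfer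
  split_ifs <;> simp

theorem colTransfer_neg (v : ℕ → ℝ) (m : ℕ) :
    colTransfer wb wf (-v) m = -colTransfer wb wf v m := by
  unfold colTransfer
  split_ifs <;> simp only [Pi.neg_apply] <;> ring

end colTransferLinear

namespace IsSolution

variable {k : ℕ} {wb wf : ℝ} {f : ℂ → ℂ} {a : ℕ → ℂ}

theorem hasCoeffs_colTransfer (hf : IsSolution k wb wf f) (ha : HasCoeffs f a) :
    HasCoeffs f fun n => colTransfer (wb : ℂ) wf a n + if n = k then 1 else 0 := by
  intro y hy
  obtain ⟨x, rfl⟩ := IsAlgClosed.exists_pow_nat_eq y two_pos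
  have hx : ‖x‖ < 1 := by
    rw [norm_pow] at hy
    exact (pow_lt_one_iff_of_nonneg (norm_nonneg x) two_ne_zero).1 hy
  have hx6 : ‖x ^ 6‖ < 1 := by
    rw [norm_pow]
    exact pow_lt_one₀ (norm_nonneg x) hx (by norm_num)
  have hback : HasSum (fun n => (wb : ℂ) * (2 * a (2 * n)) * (x ^ 2) ^ n)
      (wb * (f x + f (-x))) :=
    ((ha.hasSum_even hx).mul_left (wb : ℂ)).congr_fun fun n => by ring
  have hfwd : HasSum (fun n => if n % 6 = 4 then (wf : ℂ) * (2 * a (n / 3)) * (x ^ 2) ^ n else 0)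
      (wf * x ^ 2 * (f (x ^ 6) - f (-x ^ 6))) := by
    have hinj : Function.Injective fun m : ℕ => 6 * m + 4 := fun _ _ h => by simpa using h
    refine (hinj.hasSum_iff fun n hn => if_neg fun h6 =>
      hn ⟨n / 6, show 6 * (n / 6) + 4 = n by omega⟩).1 ?_
    refine ((ha.hasSum_odd hx6).mul_left ((wf : ℂ) * x ^ 2)).congr_fun fun m => ?_
    simp only [Function.comp_apply, if_pos (show (6 * m + 4) % 6 = 4 by omega),
      show (6 * m + 4) / 3 = 2 * m + 1 by omega]
    ring
  have hsrc : HasSum (fun n => if n = k then 2 * (x ^ 2) ^ n else 0) (2 * (x ^ 2) ^ k) :=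
    (hasSum_ite_eq k _).congr_fun fun n => by split_ifs with h <;> simp [h]
  have hsum := ((hback.add hfwd).add hsrc).div_const 2
  rw [← pow_mul, ← hf.2.2 x hx, mul_div_cancel_left₀ _ two_ne_zero] at hsum
  refine hsum.congr_fun fun n => ?_
  simp only [colTransfer]
  split_ifs <;> ring

theorem coeff_eq (hf : IsSolution k wb wf f) (ha : HasCoeffs f a) (n : ℕ) :
    a n = colTransfer (wb : ℂ) wf a n + if n = k then 1 else 0 :=
  congrFun (ha.unique_s10 (hf.hasCoeffs_colTransfer ha)) n

theorem re_coeff_eq (hf : IsSolution k wb wf f) (ha : HasCoeffs f a) (n : ℕ) :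
    (a n).re = colTransfer wb wf (fun j => (a j).re) n + if n = k then 1 else 0 := by
  rw [← re_colTransfer, hf.coeff_eq ha n]
  split_ifs <;> simp

theorem im_coeff_eq (hf : IsSolution k wb wf f) (ha : HasCoeffs f a) (n : ℕ) :
    (a n).im = colTransfer wb wf (fun j => (a j).im) n := by
  rw [← im_colTransfer, hf.coeff_eq ha n]
  split_ifs <;> simp

end IsSolution

section colTransfer

variable {wb wf : ℝ} {b : ℕ → ℝ}

theorem colTransfer_nonneg (hwb : 0 ≤ wb) (hwf : 0 ≤ wf) (hb : ∀ m, 0 ≤ b m) (m : ℕ) :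
    0 ≤ colTransfer wb wf b m := by
  unfold colTransfer
  have := mul_nonneg hwb (hb (2 * m))
  split_ifs
  · exact add_nonneg this (mul_nonneg hwf (hb _))
  · simpa using this

theorem nonneg_of_colTransfer_le (hwb : 0 ≤ wb) (hwf : 0 ≤ wf) (hw : wb + wf < 1)
    (hbdd : BddBelow (Set.range b)) (hb : ∀ m, colTransfer wb wf b m ≤ b m) (m : ℕ) :
    0 ≤ b m := by
  set μ := min (⨅ j, b j) 0
  have hμb : ∀ j, μ ≤ b j := fun j => (min_le_left _ _).trans (ciInf_le hbdd j)
  have hμ0 : μ ≤ 0 := min_le_right _ _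
  have hTμ : ∀ j, (wb + wf) * μ ≤ b j := fun j => by
    refine le_trans ?_ (hb j)
    have hback := mul_le_mul_of_nonneg_left (hμb (2 * j)) hwb
    unfold colTransfer
    split_ifs
    · nlinarith [mul_le_mul_of_nonneg_left (hμb (j / 3)) hwf]
    · nlinarith
  have hμ : (wb + wf) * μ ≤ μ :=
    le_min (le_ciInf hTμ) (mul_nonpos_of_nonneg_of_nonpos (by linarith) hμ0)
  have : 0 ≤ μ := by nlinarith
  exact this.trans (hμb m)

theorem eq_zero_of_eq_colTransfer {C : ℝ} (hwb : 0 ≤ wb) (hwf : 0 ≤ wf) (hw : wb + wf < 1)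
    (hC : ∀ m, |b m| ≤ C) (hb : ∀ m, b m = colTransfer wb wf b m) (m : ℕ) : b m = 0 := by
  have hpos := nonneg_of_colTransfer_le hwb hwf hw
    ⟨-C, Set.forall_mem_range.2 fun j => neg_le_of_abs_le (hC j)⟩ (fun j => (hb j).ge) m
  have hneg := nonneg_of_colTransfer_le (b := -b) hwb hwf hw
    ⟨-C, Set.forall_mem_range.2 fun j => neg_le_neg (le_of_abs_le (hC j))⟩
    (fun j => by rw [colTransfer_neg, Pi.neg_apply, ← hb]) m
  simp only [Pi.neg_apply, neg_nonneg] at hneg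
  linarith

theorem colTransfer_col_pos (hwb : 0 < wb) (hwf : 0 < wf) (hb : ∀ m, 0 ≤ b m) {p : ℕ}
    (hp : 0 < b p) : 0 < colTransfer wb wf b (Col p) := by
  unfold colTransfer Col
  split_ifs with hodd h6 h6
  · rw [show (3 * p + 1) / 3 = p by omega]
    exact add_pos_of_nonneg_of_pos (mul_nonneg hwb.le (hb _)) (mul_pos hwf hp)
  · omega
  · rw [show 2 * (p / 2) = p by omega]
    exact add_pos_of_pos_of_nonneg (mul_pos hwb hp) (mul_nonneg hwf.le (hb _))
  · rw [show 2 * (p / 2) = p by omega, add_zero]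
    exact mul_pos hwb hp

theorem pos_of_mem_orbit {k : ℕ} (hwb : 0 < wb) (hwf : 0 < wf) (hb0 : ∀ m, 0 ≤ b m)
    (hb : ∀ m, b m = colTransfer wb wf b m + if m = k then 1 else 0) (i : ℕ) :
    0 < b (Col^[i] k) := by
  induction i with
  | zero =>
    rw [Function.iterate_zero_apply, hb, if_pos rfl]
    linarith [colTransfer_nonneg hwb.le hwf.le hb0 k]
  | succ i ih =>
    rw [Function.iterate_succ_apply', hb]
    have := colTransfer_col_pos hwb hwf hb0 ih
    split_ifs <;> linarith

end colTransfer

theorem stmt_10_general (k : ℕ) (wb wf : ℝ) (f : ℂ → ℂ) (a : ℕ → ℂ)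
    (hwb : 0 < wb) (hwf : 0 < wf) (hw : wb + wf < 1)
    (hf : IsSolution k wb wf f) (ha : HasCoeffs f a)
    (n : ℕ) (horbit : ∃ i : ℕ, Col^[i] k = n) :
    (a n).im = 0 ∧ 0 < (a n).re := by
  obtain ⟨i, rfl⟩ := horbit
  obtain ⟨C, hC⟩ := hf.2.1
  have hbound : ∀ m, ‖a m‖ ≤ C := ha.norm_le hC
  have hre_nonneg : ∀ m, 0 ≤ (a m).re :=
    nonneg_of_colTransfer_le hwb.le hwf.le hw
      ⟨-C, Set.forall_mem_range.2 fun m =>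
        neg_le_of_abs_le ((Complex.abs_re_le_norm _).trans (hbound m))⟩
      fun m => (le_add_of_nonneg_right (by split_ifs <;> norm_num)).trans (hf.re_coeff_eq ha m).ge
  exact ⟨eq_zero_of_eq_colTransfer hwb.le hwf.le hw
      (fun m => (Complex.abs_im_le_norm _).trans (hbound m)) (hf.im_coeff_eq ha) _,
    pos_of_mem_orbit hwb hwf hre_nonneg (hf.re_coeff_eq ha) i⟩

theorem stmt_10 (k : ℕ) (wb wf : ℝ) (f : ℂ → ℂ) (a : ℕ → ℂ) (hk : 0 < k)
    (hwb : 0 < wb) (hwf : 0 < wf) (hw : wb + wf < 1)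
    (hf : IsSolution k wb wf f) (ha : HasCoeffs f a)
    (n : ℕ) (hn : 0 < n) (horbit : ∃ i : ℕ, Col^[i] k = n) :
    (a n).im = 0 ∧ 0 < (a n).re :=
  stmt_10_general k wb wf f a hwb hwf hw hf ha n horbit
end

section
/- Assume |w_b| + |w_f| < 1 and k ≥ 1. There exists a sequence of polynomial functions (A_i)_{i ≥ 0} from ℂ to ℂ with A₀(x) = x^k and, for every i ≥ 0 and every complex x, 2·A_{i+1}(x²) = w_b·(A_i(x) + A_i(−x)) + w_f·x²·(A_i(x⁶) − A_i(−x⁶)) + 2·x^(2k); moreover, for any such sequence, A_i converges uniformly on the open unit disc to the unique solution f of the Collatz functional equation for (k, w_b, w_f). -/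
open Polynomial Filter

namespace Polynomial

variable {R : Type*}

theorem expand_contract_add_X_mul_expand_contract_divX [CommSemiring R] (p : R[X]) :
    expand R 2 (contract 2 p) + X * expand R 2 (contract 2 p.divX) = p := by
  ext (_ | n)
  · simp [coeff_expand, coeff_contract]
  · simp only [coeff_add, coeff_X_mul, coeff_expand two_pos, coeff_contract two_ne_zero, coeff_divX]
    split_ifs <;> try omega
    · rw [add_zero, Nat.div_mul_cancel ‹2 ∣ n + 1›]
    · rw [zero_add, Nat.div_mul_cancel ‹2 ∣ n›]

theorem eval_add_eval_neg [CommRing R] (p : R[X]) (x : R) :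
    p.eval x + p.eval (-x) = 2 * (contract 2 p).eval (x ^ 2) := by
  conv_lhs => rw [← expand_contract_add_X_mul_expand_contract_divX p]
  simp only [eval_add, eval_mul, eval_X, expand_eval, neg_sq]
  ring

theorem eval_sub_eval_neg [CommRing R] (p : R[X]) (x : R) :
    p.eval x - p.eval (-x) = 2 * x * (contract 2 p.divX).eval (x ^ 2) := by
  conv_lhs => rw [← expand_contract_add_X_mul_expand_contract_divX p]
  simp only [eval_add, eval_mul, eval_X, expand_eval, neg_sq]
  ring

theorem exists_norm_eval_le_of_norm_lt_one (p : ℂ[X]) :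
    ∃ M, ∀ z : ℂ, ‖z‖ < 1 → ‖p.eval z‖ ≤ M := by
  obtain ⟨M, hM⟩ := (isCompact_closedBall (0 : ℂ) 1).exists_bound_of_continuousOn
    p.continuous.continuousOn
  exact ⟨M, fun z hz => hM z (mem_closedBall_zero_iff.2 hz.le)⟩

end Polynomial

theorem exists_sq_eq_of_norm_lt_one {z : ℂ} (hz : ‖z‖ < 1) : ∃ x : ℂ, ‖x‖ < 1 ∧ x ^ 2 = z := by
  obtain ⟨x, hx⟩ := IsAlgClosed.exists_pow_nat_eq z two_pos
  refine ⟨x, ?_, hx⟩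
  rw [← hx, norm_pow] at hz
  exact (pow_lt_one_iff_of_nonneg (norm_nonneg x) two_ne_zero).1 hz

theorem norm_pow_lt_one_of_norm_lt_one {x : ℂ} (hx : ‖x‖ < 1) {n : ℕ} (hn : n ≠ 0) :
    ‖x ^ n‖ < 1 := by
  rw [norm_pow]
  exact pow_lt_one₀ (norm_nonneg x) hx hn

theorem norm_pow_le_one_of_norm_lt_one {x : ℂ} (hx : ‖x‖ < 1) (n : ℕ) : ‖x ^ n‖ ≤ 1 := by
  rw [norm_pow]
  exact pow_le_one₀ (norm_nonneg x) hx.le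

theorem isOpen_openUnitDisc : IsOpen openUnitDisc :=
  isOpen_lt continuous_norm continuous_const

section CollatzOperator

variable (wb wf : ℝ)

/-- The Collatz functional equation reads `2 f(x²) = collatzRHS wb wf f x + 2 x^(2k)`. -/
def collatzRHS (g : ℂ → ℂ) (x : ℂ) : ℂ :=
  (wb : ℂ) * (g x + g (-x)) + (wf : ℂ) * x ^ 2 * (g (x ^ 6) - g (-x ^ 6))

variable {wb wf}

theorem collatzRHS_sub (g h : ℂ → ℂ) (x : ℂ) :
    collatzRHS wb wf g x - collatzRHS wb wf h x = collatzRHS wb wf (g - h) x := by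
  simp only [collatzRHS, Pi.sub_apply]
  ring

theorem norm_collatzRHS_le {g : ℂ → ℂ} {M : ℝ} (hg : ∀ z : ℂ, ‖z‖ < 1 → ‖g z‖ ≤ M)
    {x : ℂ} (hx : ‖x‖ < 1) : ‖collatzRHS wb wf g x‖ ≤ (|wb| + |wf|) * (2 * M) := by
  have hx6 := norm_pow_lt_one_of_norm_lt_one hx (n := 6) (by norm_num)
  have hx2 := norm_pow_le_one_of_norm_lt_one hx 2
  have hM : 0 ≤ M := (norm_nonneg _).trans (hg 0 (by simp))
  have heven : ‖g x + g (-x)‖ ≤ 2 * M := by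
    linarith [norm_add_le (g x) (g (-x)), hg x hx, hg (-x) (by rwa [norm_neg])]
  have hodd : ‖x ^ 2 * (g (x ^ 6) - g (-x ^ 6))‖ ≤ 2 * M := by
    rw [norm_mul]
    have := norm_sub_le (g (x ^ 6)) (g (-x ^ 6))
    have := hg (x ^ 6) hx6
    have := hg (-x ^ 6) (by rwa [norm_neg])
    nlinarith [norm_nonneg (x ^ 2), norm_nonneg (g (x ^ 6) - g (-x ^ 6))]
  calc ‖collatzRHS wb wf g x‖
      ≤ |wb| * ‖g x + g (-x)‖ + |wf| * ‖x ^ 2 * (g (x ^ 6) - g (-x ^ 6))‖ := by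
        refine (norm_add_le _ _).trans_eq ?_
        rw [mul_assoc, norm_mul, norm_mul, Complex.norm_real, Complex.norm_real,
          Real.norm_eq_abs, Real.norm_eq_abs]
    _ ≤ (|wb| + |wf|) * (2 * M) := by
        nlinarith [abs_nonneg wb, abs_nonneg wf]

theorem norm_sub_le_of_collatzRHS {F G F' G' c : ℂ → ℂ} {M : ℝ}
    (hF : ∀ x : ℂ, ‖x‖ < 1 → 2 * F (x ^ 2) = collatzRHS wb wf F' x + c x)
    (hG : ∀ x : ℂ, ‖x‖ < 1 → 2 * G (x ^ 2) = collatzRHS wb wf G' x + c x)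
    (hM : ∀ z : ℂ, ‖z‖ < 1 → ‖F' z - G' z‖ ≤ M) {z : ℂ} (hz : ‖z‖ < 1) :
    ‖F z - G z‖ ≤ (|wb| + |wf|) * M := by
  obtain ⟨x, hx, rfl⟩ := exists_sq_eq_of_norm_lt_one hz
  have hdiff : 2 * (F (x ^ 2) - G (x ^ 2)) = collatzRHS wb wf (F' - G') x := by
    rw [← collatzRHS_sub]
    linear_combination hF x hx - hG x hx
  have := norm_collatzRHS_le (wb := wb) (wf := wf) (g := F' - G') hM hx
  rw [← hdiff, norm_mul, Complex.norm_two] at this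
  linarith

theorem norm_sub_le_pow_mul_of_collatzRHS {A B : ℕ → ℂ → ℂ} {c : ℂ → ℂ} {M : ℝ}
    (hA : ∀ i, ∀ x : ℂ, ‖x‖ < 1 → 2 * A (i + 1) (x ^ 2) = collatzRHS wb wf (A i) x + c x)
    (hB : ∀ i, ∀ x : ℂ, ‖x‖ < 1 → 2 * B (i + 1) (x ^ 2) = collatzRHS wb wf (B i) x + c x)
    (h0 : ∀ z : ℂ, ‖z‖ < 1 → ‖A 0 z - B 0 z‖ ≤ M) (i : ℕ) {z : ℂ} (hz : ‖z‖ < 1) :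
    ‖A i z - B i z‖ ≤ (|wb| + |wf|) ^ i * M := by
  induction i generalizing z with
  | zero => simpa using h0 z hz
  | succ i ih =>
    rw [pow_succ', mul_assoc]
    exact norm_sub_le_of_collatzRHS (hA i) (hB i) (fun w hw => ih hw) hz

end CollatzOperator

theorem tendstoUniformlyOn_of_norm_sub_le_pow_mul {A : ℕ → ℂ → ℂ} {f : ℂ → ℂ} {s : Set ℂ}
    {q M : ℝ} (hq0 : 0 ≤ q) (hq : q < 1) (h : ∀ i, ∀ z ∈ s, ‖A i z - f z‖ ≤ q ^ i * M) :
    TendstoUniformlyOn A f atTop s := by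
  rw [Metric.tendstoUniformlyOn_iff]
  intro ε hε
  have hlim : Tendsto (fun i : ℕ => q ^ i * M) atTop (nhds 0) := by
    simpa using (tendsto_pow_atTop_nhds_zero_of_lt_one hq0 hq).mul_const M
  filter_upwards [hlim.eventually (gt_mem_nhds hε)] with i hi z hz
  rw [dist_comm, Complex.dist_eq]
  exact (h i z hz).trans_lt hi

section CollatzPolynomials

variable (k : ℕ) (wb wf : ℝ)

/-- `contract 2 p` and `contract 2 p.divX` are the even and odd parts of `p`, so that
`2 (collatzStep p)(x²) = wb (p(x) + p(−x)) + wf x² (p(x⁶) − p(−x⁶)) + 2 x^(2k)`. -/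
noncomputable def collatzStep (p : ℂ[X]) : ℂ[X] :=
  C (wb : ℂ) * contract 2 p + C (wf : ℂ) * X ^ 4 * expand ℂ 6 (contract 2 p.divX) + X ^ k

noncomputable def collatzPoly : ℕ → ℂ[X]
  | 0 => X ^ k
  | i + 1 => collatzStep k wb wf (collatzPoly i)

theorem eval_collatzStep (p : ℂ[X]) (x : ℂ) :
    2 * (collatzStep k wb wf p).eval (x ^ 2) =
      collatzRHS wb wf p.eval x + 2 * x ^ (2 * k) := by
  simp only [collatzStep, collatzRHS, eval_add, eval_mul, eval_C, eval_pow, eval_X, expand_eval,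
    eval_add_eval_neg, eval_sub_eval_neg, ← pow_mul]
  ring

theorem eval_collatzPoly_succ (i : ℕ) (x : ℂ) :
    2 * (collatzPoly k wb wf (i + 1)).eval (x ^ 2) =
      collatzRHS wb wf (collatzPoly k wb wf i).eval x + 2 * x ^ (2 * k) :=
  eval_collatzStep k wb wf _ x

variable {k wb wf}

theorem exists_norm_eval_collatzPoly_sub_le :
    ∃ M, ∀ i, ∀ z : ℂ, ‖z‖ < 1 →
      ‖(collatzPoly k wb wf i).eval z - (collatzPoly k wb wf (i + 1)).eval z‖ ≤
        (|wb| + |wf|) ^ i * M := by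
  obtain ⟨M, hM⟩ := exists_norm_eval_le_of_norm_lt_one
    (collatzPoly k wb wf 0 - collatzPoly k wb wf 1)
  refine ⟨M, fun i z hz => ?_⟩
  refine norm_sub_le_pow_mul_of_collatzRHS (A := fun i => (collatzPoly k wb wf i).eval)
    (B := fun i => (collatzPoly k wb wf (i + 1)).eval)
    (fun i x _ => eval_collatzPoly_succ k wb wf i x)
    (fun i x _ => eval_collatzPoly_succ k wb wf (i + 1) x) (fun z hz => ?_) i hz
  simpa using hM z hz

end CollatzPolynomials

section CollatzLimit

variable {k : ℕ} {wb wf : ℝ}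

theorem isSolution_of_tendstoUniformlyOn {A : ℕ → ℂ[X]} {f : ℂ → ℂ}
    (hA : ∀ i, ∀ x : ℂ,
      2 * (A (i + 1)).eval (x ^ 2) = collatzRHS wb wf (A i).eval x + 2 * x ^ (2 * k))
    (hf : TendstoUniformlyOn (fun i => (A i).eval) f atTop openUnitDisc) :
    IsSolution k wb wf f := by
  refine ⟨?analytic, ?bounded, fun x hx => ?equation⟩
  case analytic =>
    refine DifferentiableOn.analyticOnNhd ?_ isOpen_openUnitDisc
    exact hf.tendstoLocallyUniformlyOn.differentiableOn
      (Eventually.of_forall fun i => (A i).differentiable.differentiableOn) isOpen_openUnitDisc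
  case bounded =>
    obtain ⟨i, hi⟩ := (Metric.tendstoUniformlyOn_iff.1 hf 1 one_pos).exists
    obtain ⟨M, hM⟩ := exists_norm_eval_le_of_norm_lt_one (A i)
    refine ⟨M + 1, fun z hz => ?_⟩
    linarith [norm_le_norm_add_const_of_dist_le (hi z hz).le, hM z hz]
  case equation =>
    have hlim : ∀ y : ℂ, ‖y‖ < 1 → Tendsto (fun i => (A i).eval y) atTop (nhds (f y)) :=
      fun y hy => hf.tendsto_at hy
    have hneg : ∀ y : ℂ, ‖y‖ < 1 → ‖-y‖ < 1 := fun y hy => by rwa [norm_neg]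
    have hx6 := norm_pow_lt_one_of_norm_lt_one hx (n := 6) (by norm_num)
    have hlhs := ((hlim _ (norm_pow_lt_one_of_norm_lt_one hx two_ne_zero)).comp
      (tendsto_add_atTop_nat 1)).const_mul 2
    have hrhs := ((((hlim x hx).add (hlim _ (hneg x hx))).const_mul (wb : ℂ)).add
      (((hlim _ hx6).sub (hlim _ (hneg _ hx6))).const_mul ((wf : ℂ) * x ^ 2))).add_const
      (2 * x ^ (2 * k))
    exact tendsto_nhds_unique (hlhs.congr fun i => hA i x) hrhs

theorem exists_tendstoUniformlyOn_collatzPoly (hw : |wb| + |wf| < 1) :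
    ∃ f : ℂ → ℂ,
      TendstoUniformlyOn (fun i => (collatzPoly k wb wf i).eval) f atTop openUnitDisc := by
  obtain ⟨M, hM⟩ := exists_norm_eval_collatzPoly_sub_le (k := k) (wb := wb) (wf := wf)
  have hstep : ∀ z : ℂ, ‖z‖ < 1 → ∀ i, dist ((collatzPoly k wb wf i).eval z)
      ((collatzPoly k wb wf (i + 1)).eval z) ≤ M * (|wb| + |wf|) ^ i := fun z hz i => by
    rw [dist_eq_norm, mul_comm]
    exact hM i z hz
  refine ⟨fun z => limUnder atTop fun i => (collatzPoly k wb wf i).eval z,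
    tendstoUniformlyOn_of_norm_sub_le_pow_mul (M := M / (1 - (|wb| + |wf|))) (by positivity) hw
      fun i z hz => ?_⟩
  have := dist_le_of_le_geometric_of_tendsto _ _ hw (hstep z hz)
    (cauchySeq_of_le_geometric _ _ hw (hstep z hz)).tendsto_limUnder i
  rw [dist_eq_norm] at this
  exact this.trans_eq (by ring)

end CollatzLimit

theorem IsSolution.tendstoUniformlyOn {k : ℕ} {wb wf : ℝ} (hw : |wb| + |wf| < 1)
    {f : ℂ → ℂ} (hf : IsSolution k wb wf f) {A : ℕ → ℂ → ℂ} (h0 : ∀ x, A 0 x = x ^ k)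
    (hA : ∀ i, ∀ x : ℂ, 2 * A (i + 1) (x ^ 2) = collatzRHS wb wf (A i) x + 2 * x ^ (2 * k)) :
    TendstoUniformlyOn A f atTop openUnitDisc := by
  obtain ⟨-, ⟨C, hC⟩, hfeq⟩ := hf
  refine tendstoUniformlyOn_of_norm_sub_le_pow_mul (M := 1 + C) (by positivity) hw
    fun i z hz => norm_sub_le_pow_mul_of_collatzRHS (B := fun _ => f) (fun i x _ => hA i x)
      (fun _ x hx => hfeq x hx) (fun z hz => ?_) i hz
  rw [h0]
  linarith [norm_sub_le (z ^ k) (f z), norm_pow_le_one_of_norm_lt_one hz k, hC z hz]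

theorem stmt_17_general (k : ℕ) (wb wf : ℝ) (hw : |wb| + |wf| < 1) :
    (∃ A : ℕ → ℂ → ℂ,
      (∀ i : ℕ, ∃ p : Polynomial ℂ, ∀ x : ℂ, A i x = p.eval x) ∧
      (∀ x : ℂ, A 0 x = x ^ k) ∧
      (∀ i : ℕ, ∀ x : ℂ,
        2 * A (i + 1) (x ^ 2) =
          (wb : ℂ) * (A i x + A i (-x)) + (wf : ℂ) * x ^ 2 * (A i (x ^ 6) - A i (-x ^ 6)) +
            2 * x ^ (2 * k))) ∧
    (∃ f : ℂ → ℂ, IsSolution k wb wf f ∧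
      ∀ g : ℂ → ℂ, IsSolution k wb wf g → Set.EqOn g f openUnitDisc) ∧
    ∀ A : ℕ → ℂ → ℂ,
      ((∀ i : ℕ, ∃ p : Polynomial ℂ, ∀ x : ℂ, A i x = p.eval x) ∧
        (∀ x : ℂ, A 0 x = x ^ k) ∧
        (∀ i : ℕ, ∀ x : ℂ,
          2 * A (i + 1) (x ^ 2) =
            (wb : ℂ) * (A i x + A i (-x)) + (wf : ℂ) * x ^ 2 * (A i (x ^ 6) - A i (-x ^ 6)) +
              2 * x ^ (2 * k))) →
      ∀ f : ℂ → ℂ, IsSolution k wb wf f →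
        TendstoUniformlyOn A f Filter.atTop openUnitDisc := by
  have hP0 : ∀ x : ℂ, (collatzPoly k wb wf 0).eval x = x ^ k := by simp [collatzPoly]
  have hP := eval_collatzPoly_succ k wb wf
  obtain ⟨f, hPf⟩ := exists_tendstoUniformlyOn_collatzPoly (k := k) hw
  refine ⟨⟨_, fun i => ⟨_, fun _ => rfl⟩, hP0, hP⟩,
    ⟨f, isSolution_of_tendstoUniformlyOn hP hPf, fun g hg z hz => ?_⟩,
    fun A ⟨_, h0, hA⟩ g hg => hg.tendstoUniformlyOn hw h0 hA⟩
  have hPg := hg.tendstoUniformlyOn (A := fun i => (collatzPoly k wb wf i).eval) hw hP0 hP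
  exact tendsto_nhds_unique (hPg.tendsto_at hz) (hPf.tendsto_at hz)

theorem stmt_17 (k : ℕ) (wb wf : ℝ) (hk : 1 ≤ k) (hw : |wb| + |wf| < 1) :
    (∃ A : ℕ → ℂ → ℂ,
      (∀ i : ℕ, ∃ p : Polynomial ℂ, ∀ x : ℂ, A i x = p.eval x) ∧
      (∀ x : ℂ, A 0 x = x ^ k) ∧
      (∀ i : ℕ, ∀ x : ℂ,
        2 * A (i + 1) (x ^ 2) =
          (wb : ℂ) * (A i x + A i (-x)) + (wf : ℂ) * x ^ 2 * (A i (x ^ 6) - A i (-x ^ 6)) +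
            2 * x ^ (2 * k))) ∧
    (∃ f : ℂ → ℂ, IsSolution k wb wf f ∧
      ∀ g : ℂ → ℂ, IsSolution k wb wf g → Set.EqOn g f openUnitDisc) ∧
    ∀ A : ℕ → ℂ → ℂ,
      ((∀ i : ℕ, ∃ p : Polynomial ℂ, ∀ x : ℂ, A i x = p.eval x) ∧
        (∀ x : ℂ, A 0 x = x ^ k) ∧
        (∀ i : ℕ, ∀ x : ℂ,
          2 * A (i + 1) (x ^ 2) =
            (wb : ℂ) * (A i x + A i (-x)) + (wf : ℂ) * x ^ 2 * (A i (x ^ 6) - A i (-x ^ 6)) +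
              2 * x ^ (2 * k))) →
      ∀ f : ℂ → ℂ, IsSolution k wb wf f →
        TendstoUniformlyOn A f Filter.atTop openUnitDisc :=
  stmt_17_general k wb wf hw
end
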